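/- For every positive integer M, every real t ≥ 1 and every real c, we have ∑ φ(n) ≤ K·M·e^{-100·c·t} for some absolute constant K, where the sum ranges over factorizations M = m·n with ∑_{p | m, p ≥ t} 1/p ≥ c. -/

import Mathlib

/-!
Rankin's trick. Put `L = 100 t` and `S m = ∑_{p ∣ m, p ≥ t} 1 / p`; the condition `c ≤ S (M / n)`
gives `1 ≤ exp (L (S (M / n) - c))`. Expanding `exp (L S m) = ∏_{p ∣ m, p ≥ t} (1 + (e^{L/p} - 1))`
over squarefree `d = ∏_{p ∈ A} p ∣ m`, and using `∑_{n ∣ M, d ∣ M / n} φ n = M / d`, turns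
`∑_{n ∣ M} φ n · exp (L S (M / n))` into `M ∏_{p ∣ M, p ≥ t} (1 + (e^{L/p} - 1) / p)`.
As `L / p ≤ 100`, each factor is `1 + O(t / p²)`, and `∑_{p ≥ t} 1 / p² ≤ 2 / t`.
-/

open Finset Real

namespace Nat

lemma divisors_filter_dvd_div {M d : ℕ} (hM : M ≠ 0) (hd : d ∣ M) :
    {n ∈ M.divisors | d ∣ M / n} = (M / d).divisors := by
  have hMd : M / d ≠ 0 := (div_pos (le_of_dvd (pos_of_ne_zero hM) hd)
    (pos_of_dvd_of_pos hd (pos_of_ne_zero hM))).ne'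
  ext n
  simp only [mem_filter, mem_divisors, and_iff_left hM, and_iff_left hMd]
  constructor
  · rintro ⟨hn, hdn⟩
    rw [dvd_div_iff_mul_dvd hd, mul_comm]
    exact (dvd_div_iff_mul_dvd hn).mp hdn
  · intro hn
    have hdn : d * n ∣ M := (dvd_div_iff_mul_dvd hd).mp hn
    have hnM : n ∣ M := dvd_of_mul_left_dvd hdn
    exact ⟨hnM, (dvd_div_iff_mul_dvd hnM).mpr (mul_comm d n ▸ hdn)⟩

lemma primeFactors_eq_filter_dvd {m M : ℕ} (hM : M ≠ 0) (hm : m ∣ M) :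
    m.primeFactors = {p ∈ M.primeFactors | p ∣ m} := by
  have hm0 : m ≠ 0 := ne_zero_of_dvd_ne_zero hM hm
  ext p
  simp only [mem_filter, mem_primeFactors]
  exact ⟨fun ⟨hp, hpm, _⟩ => ⟨⟨hp, hpm.trans hm, hM⟩, hpm⟩,
    fun ⟨⟨hp, _, _⟩, hpm⟩ => ⟨hp, hpm, hm0⟩⟩

end Nat

lemma Finset.prod_primes_dvd_iff {s : Finset ℕ} (hs : ∀ p ∈ s, p.Prime) (m : ℕ) :
    ∏ p ∈ s, p ∣ m ↔ ∀ p ∈ s, p ∣ m :=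
  ⟨fun h _ hp => (dvd_prod_of_mem _ hp).trans h,
    prod_primes_dvd m fun p hp => (hs p hp).prime⟩

lemma prod_filter_dvd_one_add {R : Type*} [CommSemiring R] {F : Finset ℕ}
    (hF : ∀ p ∈ F, p.Prime) (f : ℕ → R) (m : ℕ) :
    ∏ p ∈ F with p ∣ m, (1 + f p) = ∑ A ∈ F.powerset with ∏ p ∈ A, p ∣ m, ∏ p ∈ A, f p := by
  rw [prod_one_add]
  congr 1
  ext A
  simp only [mem_powerset, mem_filter, subset_iff]
  constructor
  · intro h
    have hAF : ∀ p ∈ A, p ∈ F := fun p hp => (h hp).1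
    exact ⟨hAF, (prod_primes_dvd_iff (fun p hp => hF p (hAF p hp)) m).mpr fun p hp => (h hp).2⟩
  · rintro ⟨hAF, hA⟩ p hp
    exact ⟨hAF hp, (prod_primes_dvd_iff (fun p hp => hF p (hAF hp)) m).mp hA p hp⟩

theorem sum_totient_mul_prod_filter_dvd_div {R : Type*} [Field R] [CharZero R] {M : ℕ}
    (hM : M ≠ 0) {F : Finset ℕ} (hF : ∀ p ∈ F, p.Prime ∧ p ∣ M) (f : ℕ → R) :
    ∑ n ∈ M.divisors, (n.totient : R) * ∏ p ∈ F with p ∣ M / n, (1 + f p) =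
      M * ∏ p ∈ F, (1 + f p / p) := by
  have hprime p (hp : p ∈ F) : p.Prime := (hF p hp).1
  have hdvd : ∀ A ∈ F.powerset, ∏ p ∈ A, p ∣ M := fun A hA =>
    (prod_primes_dvd_iff (fun p hp => hprime p (mem_powerset.mp hA hp)) M).mpr
      fun p hp => (hF p (mem_powerset.mp hA hp)).2
  calc ∑ n ∈ M.divisors, (n.totient : R) * ∏ p ∈ F with p ∣ M / n, (1 + f p)
      = ∑ A ∈ F.powerset, (∑ n ∈ M.divisors with ∏ p ∈ A, p ∣ M / n, (n.totient : R)) *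
          ∏ p ∈ A, f p := by
        simp_rw [prod_filter_dvd_one_add hprime, sum_filter, mul_sum, sum_mul, mul_ite,
          ite_mul, mul_zero, zero_mul]
        exact sum_comm
    _ = ∑ A ∈ F.powerset, ((M / ∏ p ∈ A, p : ℕ) : R) * ∏ p ∈ A, f p := by
        refine sum_congr rfl fun A hA => ?_
        rw [Nat.divisors_filter_dvd_div hM (hdvd A hA), ← Nat.cast_sum, Nat.sum_totient]
    _ = ∑ A ∈ F.powerset, M * ∏ p ∈ A, f p / p := by
        refine sum_congr rfl fun A hA => ?_
        have hA0 : ((∏ p ∈ A, p : ℕ) : R) ≠ 0 := by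
          rw [Nat.cast_ne_zero, prod_ne_zero_iff]
          exact fun p hp => (hprime p (mem_powerset.mp hA hp)).ne_zero
        rw [Nat.cast_div (hdvd A hA) hA0, prod_div_distrib, Nat.cast_prod]
        ring
    _ = M * ∏ p ∈ F, (1 + f p / p) := by rw [← mul_sum, prod_one_add]

lemma sum_filter_le_le_exp_neg_mul_sum {ι : Type*} (s : Finset ι) {w : ι → ℝ}
    (hw : ∀ i ∈ s, 0 ≤ w i) (S : ι → ℝ) {L : ℝ} (hL : 0 ≤ L) (c : ℝ) :
    ∑ i ∈ s with c ≤ S i, w i ≤ exp (-(L * c)) * ∑ i ∈ s, w i * exp (L * S i) := by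
  rw [mul_sum]
  refine (sum_le_sum fun i hi => ?_).trans
    (sum_le_sum_of_subset_of_nonneg (filter_subset _ s) fun i hi _ => ?_)
  · have hone : 1 ≤ exp (-(L * c)) * exp (L * S i) := by
      rw [← exp_add, one_le_exp_iff]
      nlinarith [(mem_filter.mp hi).2]
    nlinarith [hw i (mem_filter.mp hi).1]
  · exact mul_nonneg (exp_pos _).le (mul_nonneg (hw i hi) (exp_pos _).le)

lemma exp_sub_one_le_mul_exp (x : ℝ) : exp x - 1 ≤ x * exp x := by
  have h := add_one_le_exp (-x)
  rw [exp_neg] at h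
  have h' : (1 - x) * exp x ≤ 1 := by
    rw [← le_div_iff₀ (exp_pos x), one_div]
    linarith
  linarith

lemma sum_inv_sq_le_two_div {F : Finset ℕ} {t : ℝ} (ht : 0 < t) (hF : ∀ p ∈ F, t ≤ p) :
    ∑ p ∈ F, ((p : ℝ) ^ 2)⁻¹ ≤ 2 / t := by
  have hceil : 1 ≤ ⌈t⌉₊ := Nat.one_le_ceil_iff.mpr ht
  have hsub : F ⊆ Ioo (⌈t⌉₊ - 1) (F.sup id + 1) := fun p hp => by
    have : ⌈t⌉₊ ≤ p := Nat.ceil_le.mpr (hF p hp)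
    have : p ≤ F.sup id := le_sup (f := id) hp
    rw [mem_Ioo]
    omega
  calc ∑ p ∈ F, ((p : ℝ) ^ 2)⁻¹
      ≤ ∑ p ∈ Ioo (⌈t⌉₊ - 1) (F.sup id + 1), ((p : ℝ) ^ 2)⁻¹ :=
        sum_le_sum_of_subset_of_nonneg hsub fun _ _ _ => by positivity
    _ ≤ 2 / ((⌈t⌉₊ - 1 : ℕ) + 1) := sum_Ioo_inv_sq_le _ _
    _ ≤ 2 / t := by
        rw [Nat.cast_sub hceil, Nat.cast_one, sub_add_cancel]
        exact div_le_div_of_nonneg_left zero_le_two ht (Nat.le_ceil t)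

lemma prod_one_add_exp_sub_one_div_le {F : Finset ℕ} {a t : ℝ} (ha : 0 ≤ a) (ht : 0 < t)
    (hF : ∀ p ∈ F, t ≤ p) :
    ∏ p ∈ F, (1 + (exp (a * t / p) - 1) / p) ≤ exp (2 * a * exp a) := by
  have hterm : ∀ p ∈ F, (exp (a * t / p) - 1) / p ≤ a * exp a * t * ((p : ℝ) ^ 2)⁻¹ := by
    intro p hp
    have hp0 : 0 < (p : ℝ) := ht.trans_le (hF p hp)
    have hx : a * t / p ≤ a := by
      rw [div_le_iff₀ hp0]
      exact mul_le_mul_of_nonneg_left (hF p hp) ha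
    calc (exp (a * t / p) - 1) / p ≤ a * t / p * exp a / p := by
          gcongr
          exact (exp_sub_one_le_mul_exp _).trans (by gcongr)
      _ = a * exp a * t * ((p : ℝ) ^ 2)⁻¹ := by field_simp
  calc ∏ p ∈ F, (1 + (exp (a * t / p) - 1) / p)
      ≤ exp (∑ p ∈ F, (exp (a * t / p) - 1) / p) :=
        prod_one_add_le_exp_sum F fun p =>
          div_nonneg (sub_nonneg.mpr (one_le_exp (by positivity))) p.cast_nonneg
    _ ≤ exp (a * exp a * t * (2 / t)) := by
        gcongr
        calc ∑ p ∈ F, (exp (a * t / p) - 1) / p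
            ≤ ∑ p ∈ F, a * exp a * t * ((p : ℝ) ^ 2)⁻¹ := sum_le_sum hterm
          _ = a * exp a * t * ∑ p ∈ F, ((p : ℝ) ^ 2)⁻¹ := (mul_sum ..).symm
          _ ≤ a * exp a * t * (2 / t) := by gcongr; exact sum_inv_sq_le_two_div ht hF
    _ = exp (2 * a * exp a) := by
        congr 1
        field_simp

theorem divisor_anatomy :
    ∃ K : ℝ, 0 < K ∧ ∀ (M : ℕ), 0 < M → ∀ (t c : ℝ), 1 ≤ t →
      (∑ n ∈ M.divisors.filter (fun n =>
          c ≤ ∑ p ∈ (M / n).primeFactors.filter (fun p : ℕ => t ≤ (p : ℝ)), (1 / (p : ℝ))),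
        (Nat.totient n : ℝ)) ≤ K * M * Real.exp (-100 * c * t) := by
  refine ⟨exp (2 * 100 * exp 100), exp_pos _, fun M hM t c ht => ?_⟩
  have ht0 : 0 < t := by linarith
  set F := M.primeFactors.filter (fun p : ℕ => t ≤ (p : ℝ))
  let S (m : ℕ) : ℝ := ∑ p ∈ m.primeFactors.filter (fun p : ℕ => t ≤ (p : ℝ)), 1 / (p : ℝ)
  have hF : ∀ p ∈ F, p.Prime ∧ p ∣ M := fun p hp =>
    ⟨Nat.prime_of_mem_primeFactors (mem_filter.mp hp).1,
      Nat.dvd_of_mem_primeFactors (mem_filter.mp hp).1⟩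
  have hexp : ∀ n ∈ M.divisors,
      exp (100 * t * S (M / n)) =
        ∏ p ∈ F with p ∣ M / n, (1 + (exp (100 * t / p) - 1)) := by
    intro n hn
    simp only [S]
    rw [Nat.primeFactors_eq_filter_dvd hM.ne' (Nat.div_dvd_of_dvd (Nat.dvd_of_mem_divisors hn)),
      filter_comm, mul_sum, exp_sum]
    simp_rw [mul_one_div, add_sub_cancel]
    rfl
  calc _ ≤ exp (-(100 * t * c)) * ∑ n ∈ M.divisors, (n.totient : ℝ) *
          exp (100 * t * S (M / n)) :=
        sum_filter_le_le_exp_neg_mul_sum _ (fun _ _ => Nat.cast_nonneg _) _ (by positivity) c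
    _ = exp (-(100 * t * c)) * (M * ∏ p ∈ F, (1 + (exp (100 * t / p) - 1) / p)) := by
        rw [sum_congr rfl fun n hn => by rw [hexp n hn],
          sum_totient_mul_prod_filter_dvd_div hM.ne' hF]
    _ ≤ exp (-(100 * t * c)) * (M * exp (2 * 100 * exp 100)) := by
        gcongr
        exact prod_one_add_exp_sub_one_div_le (by norm_num) ht0 fun p hp => (mem_filter.mp hp).2
    _ = exp (2 * 100 * exp 100) * M * exp (-100 * c * t) := by ring_nf
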